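/- arXiv:2007.07808 — 3 statements merged into one kernel-verified Lean document; each statement's English description precedes it below -/
import Mathlib

section
/- Let f be a feasible flow over time in a single-sink network N, let θ ≥ 0, and let C be a directed cycle in G that contains an edge vw which is active at time θ. Then Σ_{e=uz ∈ C, e≠vw} (ℓ_z(θ) − ℓ_u(θ)) = τ_vw + q_vw(θ)/ν_vw ≥ τ_min. In particular, C contains an edge uz with ℓ_z(θ) − ℓ_u(θ) ≥ τ_min/(|C|−1) > 0. -/
open MeasureTheory Set

/-- A walk in a directed graph given by `tail`/`head` maps: `IsWalk tail head v w L`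
means the list of edges `L` forms a walk from `v` to `w`. -/
def IsWalk {V E : Type} (tail head : E → V) : V → V → List E → Prop
  | v, w, [] => v = w
  | v, w, e :: L => tail e = v ∧ IsWalk tail head (head e) w L

/-- A right-constant step function with finitely many jump points. -/
def RightConstantStep (g : ℝ → ℝ) : Prop :=
  ∃ s : Finset ℝ, ∀ x y : ℝ, x ≤ y → (∀ p ∈ s, ¬ (x < p ∧ p ≤ y)) → g x = g y

/-- A single-sink network: a finite directed graph with positive rational capacities
and travel times, a sink reachable from every node, and nonnegative rational-valued
right-constant step network inflow rates (zero at the sink and for negative times). -/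
structure Network (V E : Type) [Fintype V] [DecidableEq V] [Fintype E] [DecidableEq E] where
  tail : E → V
  head : E → V
  cap : E → ℝ
  time : E → ℝ
  sink : V
  u : V → ℝ → ℝ
  cap_pos : ∀ e, 0 < cap e
  cap_rat : ∀ e, ∃ q : ℚ, cap e = (q : ℝ)
  time_pos : ∀ e, 0 < time e
  time_rat : ∀ e, ∃ q : ℚ, time e = (q : ℝ)
  reach : ∀ v, ∃ L : List E, IsWalk tail head v sink L
  u_nonneg : ∀ v θ, 0 ≤ u v θ
  u_rat : ∀ v θ, ∃ q : ℚ, u v θ = (q : ℝ)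
  u_sink : ∀ θ, u sink θ = 0
  u_neg : ∀ v θ, θ < 0 → u v θ = 0
  u_step : ∀ v, RightConstantStep (u v)

variable {V E : Type} [Fintype V] [DecidableEq V] [Fintype E] [DecidableEq E]

/-- The edges leaving a node `v`, i.e. `δ⁺(v)`. -/
def Network.outEdges (N : Network V E) (v : V) : Finset E :=
  Finset.univ.filter (fun e => N.tail e = v)

/-- The edges entering a node `v`, i.e. `δ⁻(v)`. -/
def Network.inEdges (N : Network V E) (v : V) : Finset E :=
  Finset.univ.filter (fun e => N.head e = v)

/-- `τ_min`, the minimal travel time of an edge. -/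
noncomputable def Network.tauMin (N : Network V E) : ℝ := sInf (Set.range N.time)

/-- `max_ζ u_v(ζ)`, the maximal network inflow rate at `v`. -/
noncomputable def Network.uMax (N : Network V E) (v : V) : ℝ := ⨆ θ : ℝ, N.u v θ

/-- The maximal out-degree `Δ` of the network. -/
def Network.maxOutDeg (N : Network V E) : ℕ :=
  Finset.univ.sup (fun v => (N.outEdges v).card)

/-- All network inflow rates have bounded support. -/
def Network.BddInflow (N : Network V E) : Prop :=
  ∀ v, ∃ B : ℝ, ∀ θ, B ≤ θ → N.u v θ = 0

/-- The directed graph of the network is acyclic. -/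
def Network.Acyclic (N : Network V E) : Prop :=
  ∀ (v : V) (L : List E), L ≠ [] → ¬ IsWalk N.tail N.head v v L

/-- A flow over time: locally integrable nonnegative edge in- and outflow rates. -/
structure FlowOverTime (N : Network V E) where
  fplus : E → ℝ → ℝ
  fminus : E → ℝ → ℝ
  fplus_nonneg : ∀ e θ, 0 ≤ fplus e θ
  fminus_nonneg : ∀ e θ, 0 ≤ fminus e θ
  fplus_int : ∀ e θ, IntervalIntegrable (fplus e) volume 0 θ
  fminus_int : ∀ e θ, IntervalIntegrable (fminus e) volume 0 θ

/-- The queue length `q_e(θ) = F⁺_e(θ) − F⁻_e(θ + τ_e)`. -/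
noncomputable def queueOf (N : Network V E) (fplus fminus : E → ℝ → ℝ) (e : E) (θ : ℝ) : ℝ :=
  (∫ ζ in (0:ℝ)..θ, fplus e ζ) - ∫ ζ in (0:ℝ)..(θ + N.time e), fminus e ζ

/-- The instantaneous travel time `c_e(θ) = τ_e + q_e(θ)/ν_e`. -/
noncomputable def ctimeOf (N : Network V E) (fplus fminus : E → ℝ → ℝ) (e : E) (θ : ℝ) : ℝ :=
  N.time e + queueOf N fplus fminus e θ / N.cap e

/-- The node label `ℓ_v(θ)`: the shortest instantaneous travel time from `v` to the sink. -/
noncomputable def labelOf (N : Network V E) (fplus fminus : E → ℝ → ℝ) (v : V) (θ : ℝ) : ℝ :=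
  sInf { r : ℝ | ∃ L : List E, IsWalk N.tail N.head v N.sink L ∧
                  r = (L.map (fun e => ctimeOf N fplus fminus e θ)).sum }

/-- Edge `e` is active at time `θ`: `ℓ_{tail e}(θ) = c_e(θ) + ℓ_{head e}(θ)`. -/
def ActiveOf (N : Network V E) (fplus fminus : E → ℝ → ℝ) (e : E) (θ : ℝ) : Prop :=
  labelOf N fplus fminus (N.tail e) θ =
    ctimeOf N fplus fminus e θ + labelOf N fplus fminus (N.head e) θ

/-- Feasibility of a flow over time: flow conservation (i)/(ii), no outflow before `τ_e`
(iii), and queues operating at capacity (iv). -/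
def Feasible (N : Network V E) (f : FlowOverTime N) : Prop :=
  (∀ v, v ≠ N.sink → ∀ θ : ℝ, 0 ≤ θ →
      (∑ e ∈ N.outEdges v, f.fplus e θ) - (∑ e ∈ N.inEdges v, f.fminus e θ) = N.u v θ) ∧
  (∀ θ : ℝ, 0 ≤ θ →
      (∑ e ∈ N.outEdges N.sink, f.fplus e θ) - (∑ e ∈ N.inEdges N.sink, f.fminus e θ) ≤ 0) ∧
  (∀ e, ∀ θ : ℝ, 0 ≤ θ → θ < N.time e → f.fminus e θ = 0) ∧
  (∀ e, ∀ θ : ℝ, 0 ≤ θ →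
      f.fminus e (θ + N.time e) =
        if 0 < queueOf N f.fplus f.fminus e θ then N.cap e
        else min (f.fplus e θ) (N.cap e))

/-- An instantaneous dynamic equilibrium: a feasible flow that only sends flow
into currently active edges. -/
def IsIDE (N : Network V E) (f : FlowOverTime N) : Prop :=
  Feasible N f ∧
  ∀ e, ∀ θ : ℝ, 0 ≤ θ → 0 < f.fplus e θ → ActiveOf N f.fplus f.fminus e θ

/-- `g` is almost everywhere constant on the set `S`. -/
def AEConstOn (g : ℝ → ℝ) (S : Set ℝ) : Prop :=
  ∃ c : ℝ, ∀ᵐ θ ∂(volume.restrict S), g θ = c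

/-- The `i`-th segment of the partition `0 = t 0 < t 1 < ⋯ < t n < ∞`. -/
def phaseSeg (n : ℕ) (t : ℕ → ℝ) (i : ℕ) : Set ℝ :=
  if i < n then Set.Ioo (t i) (t (i+1)) else Set.Ioi (t n)

/-- `ℝ≥0` splits (up to finitely many points) into the `n+1` intervals given by
`t`, on each of which all edge in- and outflow rates are a.e. constant; i.e. the
flow has at most `n+1` phases. -/
def PhasePartition (N : Network V E) (f : FlowOverTime N) (n : ℕ) (t : ℕ → ℝ) : Prop :=
  t 0 = 0 ∧ (∀ i, i < n → t i < t (i+1)) ∧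
  ∀ i, i ≤ n → ∀ e, AEConstOn (f.fplus e) (phaseSeg n t i) ∧ AEConstOn (f.fminus e) (phaseSeg n t i)

private lemma walk_telescope {V E : Type} (tl hd : E → V) (g : V → ℝ) :
    ∀ (L : List E) (v w : V), IsWalk tl hd v w L →
      (L.map (fun e => g (hd e) - g (tl e))).sum = g w - g v := by
  intro L
  induction L with
  | nil => intro v w h; simp [IsWalk] at h; simp [h]
  | cons e L ih =>
      intro v w h
      obtain ⟨h1, h2⟩ := h
      simp only [List.map_cons, List.sum_cons, ih (hd e) w h2, h1]
      ring

private lemma sum_lt_of_forall_lt : ∀ (l : List ℝ) (c : ℝ), l ≠ [] → (∀ x ∈ l, x < c) →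
    l.sum < l.length * c := by
  intro l
  induction l with
  | nil => intro c h _; exact absurd rfl h
  | cons a t ih =>
      intro c _ h
      rcases eq_or_ne t [] with rfl | ht
      · simpa using h a (by simp)
      · have h1 := ih c ht (fun x hx => h x (List.mem_cons_of_mem _ hx))
        have h2 := h a (by simp)
        simp only [List.sum_cons, List.length_cons]
        push_cast
        nlinarith

private lemma queue_nonneg {V E : Type} [Fintype V] [DecidableEq V] [Fintype E] [DecidableEq E]
    (N : Network V E) (f : FlowOverTime N) (hf : Feasible N f) (e : E) :
    ∀ θ : ℝ, 0 ≤ θ → 0 ≤ queueOf N f.fplus f.fminus e θ := by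
  obtain ⟨hc1, hc2, hc3, hc4⟩ := hf
  have hτ : 0 < N.time e := N.time_pos e
  have hip : ∀ a b : ℝ, IntervalIntegrable (f.fplus e) volume a b :=
    fun a b => (f.fplus_int e a).symm.trans (f.fplus_int e b)
  have him : ∀ a b : ℝ, IntervalIntegrable (f.fminus e) volume a b :=
    fun a b => (f.fminus_int e a).symm.trans (f.fminus_int e b)
  set q := queueOf N f.fplus f.fminus e with hqdef
  have hqc : Continuous q := by
    have h1 : Continuous fun θ : ℝ => ∫ ζ in (0:ℝ)..θ, f.fplus e ζ :=
      intervalIntegral.continuous_primitive hip 0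
    have h2 : Continuous fun θ : ℝ => ∫ ζ in (0:ℝ)..(θ + N.time e), f.fminus e ζ :=
      (intervalIntegral.continuous_primitive him 0).comp (continuous_id.add continuous_const)
    exact h1.sub h2
  have hq0 : q 0 = 0 := by
    have hane : ∀ᵐ x : ℝ, x ≠ N.time e := by
      rw [ae_iff]
      simpa using Real.volume_singleton (a := N.time e)
    have hzero : (∫ ζ in (0:ℝ)..(N.time e), f.fminus e ζ) = ∫ ζ in (0:ℝ)..(N.time e), (0:ℝ) := by
      apply intervalIntegral.integral_congr_ae
      filter_upwards [hane] with x hx hmem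
      rw [Set.uIoc_of_le hτ.le] at hmem
      exact hc3 e x hmem.1.le (lt_of_le_of_ne hmem.2 hx)
    simp only [hqdef, queueOf, intervalIntegral.integral_same, zero_add, hzero,
      intervalIntegral.integral_zero]
    ring
  intro θ hθ
  by_contra hneg
  push_neg at hneg
  set S := Set.Icc (0:ℝ) θ ∩ {ζ | 0 ≤ q ζ} with hSdef
  have hS0 : (0:ℝ) ∈ S := ⟨⟨le_refl 0, hθ⟩, by simp [hq0]⟩
  have hScl : IsCompact S := isCompact_Icc.inter_right (isClosed_le continuous_const hqc)
  set θ₀ := sSup S with hθ₀def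
  have hθ₀S : θ₀ ∈ S := hScl.sSup_mem ⟨0, hS0⟩
  have hθ₀0 : 0 ≤ θ₀ := hθ₀S.1.1
  have hθ₀θ : θ₀ ≤ θ := hθ₀S.1.2
  have hqθ₀ : 0 ≤ q θ₀ := hθ₀S.2
  have hθ₀lt : θ₀ < θ := hθ₀θ.lt_of_ne (fun h => absurd (h ▸ hqθ₀) (not_le.2 hneg))
  have hIoo : ∀ ζ ∈ Set.Ioo θ₀ θ, q ζ < 0 := by
    intro ζ hζ
    by_contra hge
    push_neg at hge
    have : ζ ∈ S := ⟨⟨hθ₀0.trans hζ.1.le, hζ.2.le⟩, hge⟩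
    exact absurd (le_csSup hScl.bddAbove this) (not_le.2 hζ.1)
  -- shifted fminus integrable
  have hshift : IntervalIntegrable (fun ζ => f.fminus e (ζ + N.time e)) volume θ₀ θ := by
    have := (him (θ₀ + N.time e) (θ + N.time e)).comp_add_right (N.time e)
    simpa using this
  -- pointwise a.e. inequality on Icc θ₀ θ
  have hmono : (∫ ζ in θ₀..θ, f.fminus e (ζ + N.time e)) ≤ ∫ ζ in θ₀..θ, f.fplus e ζ := by
    apply intervalIntegral.integral_mono_ae_restrict hθ₀θ hshift (hip θ₀ θ)
    have hmem : ∀ᵐ ζ ∂(volume.restrict (Set.Icc θ₀ θ)), ζ ∈ Set.Icc θ₀ θ :=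
      ae_restrict_mem measurableSet_Icc
    have hne1 : ∀ᵐ ζ : ℝ ∂(volume.restrict (Set.Icc θ₀ θ)), ζ ≠ θ₀ :=
      ae_restrict_of_ae (by rw [ae_iff]; simpa using Real.volume_singleton (a := θ₀))
    have hne2 : ∀ᵐ ζ : ℝ ∂(volume.restrict (Set.Icc θ₀ θ)), ζ ≠ θ :=
      ae_restrict_of_ae (by rw [ae_iff]; simpa using Real.volume_singleton (a := θ))
    filter_upwards [hmem, hne1, hne2] with ζ hζ h1 h2
    have hζIoo : ζ ∈ Set.Ioo θ₀ θ :=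
      ⟨lt_of_le_of_ne hζ.1 (Ne.symm h1), lt_of_le_of_ne hζ.2 h2⟩
    have hq : ¬ (0 < queueOf N f.fplus f.fminus e ζ) := not_lt.2 (hIoo ζ hζIoo).le
    have := hc4 e ζ (hθ₀0.trans hζIoo.1.le)
    rw [if_neg hq] at this
    rw [this]
    exact min_le_left _ _
  have hcomp : (∫ ζ in θ₀..θ, f.fminus e (ζ + N.time e))
      = ∫ ζ in (θ₀ + N.time e)..(θ + N.time e), f.fminus e ζ :=
    intervalIntegral.integral_comp_add_right _ _
  have h1 : (∫ ζ in (0:ℝ)..θ₀, f.fplus e ζ) + ∫ ζ in θ₀..θ, f.fplus e ζ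
      = ∫ ζ in (0:ℝ)..θ, f.fplus e ζ :=
    intervalIntegral.integral_add_adjacent_intervals (hip 0 θ₀) (hip θ₀ θ)
  have h2 : (∫ ζ in (0:ℝ)..(θ₀ + N.time e), f.fminus e ζ)
      + ∫ ζ in (θ₀ + N.time e)..(θ + N.time e), f.fminus e ζ
      = ∫ ζ in (0:ℝ)..(θ + N.time e), f.fminus e ζ :=
    intervalIntegral.integral_add_adjacent_intervals (him 0 _) (him _ _)
  have hqθ : q θ = (∫ ζ in (0:ℝ)..θ, f.fplus e ζ)
      - ∫ ζ in (0:ℝ)..(θ + N.time e), f.fminus e ζ := rfl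
  have hqθ₀' : q θ₀ = (∫ ζ in (0:ℝ)..θ₀, f.fplus e ζ)
      - ∫ ζ in (0:ℝ)..(θ₀ + N.time e), f.fminus e ζ := rfl
  rw [hcomp] at hmono
  linarith

/-- If a directed cycle `C` (given as a closed walk `L` with pairwise
distinct edges) contains an edge `e₀ = vw` that is active at time `θ`, then the sum of
the label differences `ℓ_z(θ) − ℓ_u(θ)` over all edges `e = uz` of `C` other than `e₀`
equals `τ_{e₀} + q_{e₀}(θ)/ν_{e₀} ≥ τ_min`; in particular `C` contains an edge `uz` with
`ℓ_z(θ) − ℓ_u(θ) ≥ τ_min/(|C|−1) > 0`. -/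
theorem cycle_with_active_edge
    {V E : Type} [Fintype V] [DecidableEq V] [Fintype E] [DecidableEq E]
    (N : Network V E) (hbdd : N.BddInflow)
    (f : FlowOverTime N) (hf : Feasible N f)
    (θ : ℝ) (hθ : 0 ≤ θ)
    (v : V) (L : List E) (hne : L ≠ []) (hnodup : L.Nodup)
    (hwalk : IsWalk N.tail N.head v v L)
    (e₀ : E) (he₀ : e₀ ∈ L) (hact : ActiveOf N f.fplus f.fminus e₀ θ) :
    (((L.erase e₀).map (fun e =>
        labelOf N f.fplus f.fminus (N.head e) θ - labelOf N f.fplus f.fminus (N.tail e) θ)).sum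
      = N.time e₀ + queueOf N f.fplus f.fminus e₀ θ / N.cap e₀) ∧
    N.tauMin ≤ N.time e₀ + queueOf N f.fplus f.fminus e₀ θ / N.cap e₀ ∧
    ∃ e ∈ L,
      N.tauMin / ((L.length : ℝ) - 1)
          ≤ labelOf N f.fplus f.fminus (N.head e) θ - labelOf N f.fplus f.fminus (N.tail e) θ ∧
      0 < labelOf N f.fplus f.fminus (N.head e) θ - labelOf N f.fplus f.fminus (N.tail e) θ := by
  classical
  have htel := walk_telescope N.tail N.head (fun x => labelOf N f.fplus f.fminus x θ) L v v hwalk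
  set g : E → ℝ := fun e =>
    labelOf N f.fplus f.fminus (N.head e) θ - labelOf N f.fplus f.fminus (N.tail e) θ with hg
  have hsum0 : (L.map g).sum = 0 := by
    rw [htel]; exact sub_self _
  have hperm : (L.map g).sum = g e₀ + ((L.erase e₀).map g).sum := by
    rw [((List.perm_cons_erase he₀).map g).sum_eq]; simp
  set c := N.time e₀ + queueOf N f.fplus f.fminus e₀ θ / N.cap e₀ with hc
  have hge₀ : g e₀ = -c := by
    unfold ActiveOf ctimeOf at hact
    simp only [hg, hc]
    linarith
  have heq : ((L.erase e₀).map g).sum = c := by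
    rw [hperm, hge₀] at hsum0; linarith
  have hq0 : 0 ≤ queueOf N f.fplus f.fminus e₀ θ := queue_nonneg N f hf e₀ θ hθ
  have hτle : N.tauMin ≤ N.time e₀ :=
    csInf_le (Set.finite_range N.time).bddBelow ⟨e₀, rfl⟩
  have hτpos : 0 < N.tauMin := by
    have hmem : N.tauMin ∈ Set.range N.time :=
      Set.Nonempty.csInf_mem ⟨N.time e₀, ⟨e₀, rfl⟩⟩ (Set.finite_range N.time)
    obtain ⟨e', he'⟩ := hmem
    rw [← he']
    exact N.time_pos e'
  have hcτ : N.tauMin ≤ c :=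
    hτle.trans (le_add_of_nonneg_right (div_nonneg hq0 (N.cap_pos e₀).le))
  refine ⟨heq, hcτ, ?_⟩
  rcases eq_or_ne (L.erase e₀) [] with hM | hM
  · exfalso
    rw [hM] at heq
    simp only [List.map_nil, List.sum_nil] at heq
    linarith
  · have hlenpos : 0 < (L.erase e₀).length := List.length_pos_iff.2 hM
    have hlenR : (0:ℝ) < ((L.erase e₀).length : ℝ) := by exact_mod_cast hlenpos
    have hex : ∃ x ∈ (L.erase e₀).map g, N.tauMin / (((L.erase e₀).length : ℝ)) ≤ x := by
      by_contra hcon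
      push_neg at hcon
      have hlt := sum_lt_of_forall_lt ((L.erase e₀).map g) _ (by simp [hM]) hcon
      rw [List.length_map] at hlt
      have hmul : (((L.erase e₀).length : ℝ)) * (N.tauMin / (((L.erase e₀).length : ℝ))) =
          N.tauMin := by
        rw [mul_comm]
        exact div_mul_cancel₀ _ (ne_of_gt hlenR)
      rw [hmul] at hlt
      linarith
    obtain ⟨x, hxmem, hxle⟩ := hex
    rw [List.mem_map] at hxmem
    obtain ⟨e, heM, rfl⟩ := hxmem
    have hL1 : 1 ≤ L.length := List.length_pos_iff.2 hne
    have hlencast : ((L.length : ℝ) - 1) = (((L.erase e₀).length : ℝ)) := by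
      rw [List.length_erase_of_mem he₀]
      push_cast [Nat.cast_sub hL1]
      ring
    have hdivpos : 0 < N.tauMin / (((L.erase e₀).length : ℝ)) := div_pos hτpos hlenR
    refine ⟨e, List.mem_of_mem_erase heM, ?_, ?_⟩
    · rw [hlencast]
      exact hxle
    · have := hdivpos.trans_le hxle
      simpa [hg] using this
end

section
/- For every single-sink network N there exists a constant L > 0, namely L = Σ_{e∈E} max{1, L_e} with L_e = (Σ_{e'∈δ⁻(v_e)} ν_{e'} + max_ζ u_{v_e}(ζ))/ν_e where v_e is the tail of e, such that for every feasible flow over time f in N: each instantaneous travel time function c_e is Lipschitz continuous on ℝ≥0 with constant max{1, L_e}, and each node label function ℓ_v is Lipschitz continuous on ℝ≥0 with constant L. -/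
open MeasureTheory Set

variable {V E : Type} [Fintype V] [DecidableEq V] [Fintype E] [DecidableEq E]

/-!
Between two times `a ≤ b` the queue of `e` changes by `∫_a^b (f⁺_e(ζ) − f⁻_e(ζ + τ_e)) dζ`.
Flow conservation at the tail of `e` bounds the inflow rate by
`Σ_{e' ∈ δ⁻(v_e)} ν_{e'} + max u_{v_e}`, and the outflow rate is at most `ν_e`, so `q_e` is
Lipschitz with constant `max{ν_e L_e, ν_e}` and `c_e = τ_e + q_e / ν_e` with constant
`max{1, L_e}`. The queues are nonnegative, since a nonpositive queue can only grow, so the label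
`ℓ_v(θ)` is the infimum of the costs of walks without repeated edges. The cost of such a walk
changes by at most `Σ_e max{1, L_e} · |θ − θ'|`, which gives the Lipschitz bound on `ℓ_v`.
-/

section Walks

variable {V E : Type} {tail head : E → V}

theorem isWalk_append {v w : V} {A B : List E} :
    IsWalk tail head v w (A ++ B) ↔ ∃ m, IsWalk tail head v m A ∧ IsWalk tail head m w B := by
  induction A generalizing v with
  | nil => exact ⟨fun hB => ⟨v, rfl, hB⟩, fun ⟨_, hvm, hB⟩ => hvm ▸ hB⟩
  | cons e A ih =>
    simp only [List.cons_append, IsWalk, ih]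
    exact ⟨fun ⟨he, m, hA, hB⟩ => ⟨m, ⟨he, hA⟩, hB⟩,
      fun ⟨m, ⟨he, hA⟩, hB⟩ => ⟨he, m, hA, hB⟩⟩

/-- Cutting out the closed walk between two occurrences of an edge does not increase the
cost under nonnegative edge costs. -/
theorem exists_nodup_isWalk_sum_le {c : E → ℝ} (hc : ∀ e, 0 ≤ c e) :
    ∀ {v w : V} {L : List E}, IsWalk tail head v w L →
      ∃ L' : List E, L'.Nodup ∧ IsWalk tail head v w L' ∧ (L'.map c).sum ≤ (L.map c).sum
  | _, _, [], hL => ⟨[], List.nodup_nil, hL, le_rfl⟩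
  | _, _, e :: L, ⟨rfl, hL⟩ => by
    obtain ⟨L', hnd, hL', hle⟩ := exists_nodup_isWalk_sum_le hc hL
    by_cases he : e ∈ L'
    · obtain ⟨A, C, rfl⟩ := List.append_of_mem he
      obtain ⟨_, -, -, hC⟩ := isWalk_append.1 hL'
      have hA : 0 ≤ (A.map c).sum := List.sum_nonneg (by simpa using fun e _ => hc e)
      refine ⟨e :: C, hnd.sublist (List.sublist_append_right A _), ⟨rfl, hC⟩, ?_⟩
      simp only [List.map_append, List.map_cons, List.sum_append, List.sum_cons] at hle ⊢
      linarith [hc e]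
    · refine ⟨e :: L', List.nodup_cons.2 ⟨he, hnd⟩, ⟨rfl, hL'⟩, ?_⟩
      simpa using hle

noncomputable def walkDist (tail head : E → V) (c : E → ℝ) (v w : V) : ℝ :=
  sInf {r : ℝ | ∃ L : List E, IsWalk tail head v w L ∧ r = (L.map c).sum}

theorem walkDist_le_walkDist_add_sum [Fintype E] {c c' K : E → ℝ} {v w : V}
    (hwalk : ∃ L, IsWalk tail head v w L) (hc : ∀ e, 0 ≤ c e) (hc' : ∀ e, 0 ≤ c' e)
    (hK : ∀ e, 0 ≤ K e) (hle : ∀ e, c' e ≤ c e + K e) :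
    walkDist tail head c' v w ≤ walkDist tail head c v w + ∑ e, K e := by
  classical
  rw [← sub_le_iff_le_add]
  obtain ⟨L₀, hL₀⟩ := hwalk
  refine le_csInf ⟨_, L₀, hL₀, rfl⟩ ?_
  rintro _ ⟨L, hL, rfl⟩
  obtain ⟨L', hnd, hL', hcost⟩ := exists_nodup_isWalk_sum_le hc hL
  have hbdd : BddBelow {r : ℝ | ∃ L : List E, IsWalk tail head v w L ∧ r = (L.map c').sum} :=
    ⟨0, by rintro _ ⟨L, -, rfl⟩; exact List.sum_nonneg (by simpa using fun e _ => hc' e)⟩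
  have hK_le : (L'.map K).sum ≤ ∑ e, K e := by
    rw [← List.sum_toFinset K hnd]
    exact Finset.sum_le_univ_sum_of_nonneg hK
  calc walkDist tail head c' v w - ∑ e, K e
      ≤ (L'.map c').sum - (L'.map K).sum := sub_le_sub (csInf_le hbdd ⟨L', hL', rfl⟩) hK_le
    _ ≤ (L'.map c).sum := by
      rw [sub_le_iff_le_add, ← List.sum_map_add]
      exact List.sum_le_sum fun e _ => hle e
    _ ≤ (L.map c).sum := hcost

theorem abs_walkDist_sub_walkDist_le [Fintype E] {c c' K : E → ℝ} {v w : V}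
    (hwalk : ∃ L, IsWalk tail head v w L) (hc : ∀ e, 0 ≤ c e) (hc' : ∀ e, 0 ≤ c' e)
    (hK : ∀ e, |c e - c' e| ≤ K e) :
    |walkDist tail head c v w - walkDist tail head c' v w| ≤ ∑ e, K e := by
  have hK₀ : ∀ e, 0 ≤ K e := fun e => (abs_nonneg _).trans (hK e)
  rw [abs_sub_le_iff, sub_le_iff_le_add', sub_le_iff_le_add']
  exact ⟨walkDist_le_walkDist_add_sum hwalk hc' hc hK₀ fun e => by linarith [abs_le.1 (hK e)],
    walkDist_le_walkDist_add_sum hwalk hc hc' hK₀ fun e => by linarith [abs_le.1 (hK e)]⟩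

end Walks

theorem nonneg_of_le_of_nonpos_on_Ioo {g : ℝ → ℝ} {a b : ℝ} (hab : a ≤ b)
    (hg : ContinuousOn g (Icc a b)) (ha : 0 ≤ g a)
    (hmono : ∀ s t, a ≤ s → t ≤ b → s < t → (∀ x ∈ Ioo s t, g x ≤ 0) → g s ≤ g t) :
    0 ≤ g b := by
  by_contra! hb
  set S := Icc a b ∩ g ⁻¹' Ici 0
  have hS : IsCompact S := isCompact_Icc.of_isClosed_subset
    (hg.preimage_isClosed_of_isClosed isClosed_Icc isClosed_Ici) inter_subset_left
  obtain ⟨⟨has, hsb⟩, hgs⟩ : sSup S ∈ S := hS.sSup_mem ⟨a, left_mem_Icc.2 hab, ha⟩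
  rw [mem_preimage, mem_Ici] at hgs
  have hsb : sSup S < b := lt_of_le_of_ne hsb fun h => by rw [h] at hgs; linarith
  have hneg : ∀ x ∈ Ioo (sSup S) b, g x ≤ 0 := fun x hx => by
    by_contra! hx0
    exact (le_csSup hS.bddAbove ⟨⟨has.trans hx.1.le, hx.2.le⟩, hx0.le⟩).not_gt hx.1
  linarith [hmono _ _ has le_rfl hsb hneg]

theorem RightConstantStep.bddAbove_range {g : ℝ → ℝ} (hg : RightConstantStep g) :
    BddAbove (range g) := by
  classical
  obtain ⟨s, hs⟩ := hg
  obtain ⟨x₀, hx₀⟩ : ∃ x₀, ∀ p ∈ s, x₀ < p := by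
    obtain ⟨m, hm⟩ := s.finite_toSet.bddBelow
    exact ⟨m - 1, fun p hp => by linarith [hm hp]⟩
  refine ((insert x₀ s).finite_toSet.image g).bddAbove.mono ?_
  rintro _ ⟨x, rfl⟩
  rcases le_or_gt x x₀ with hx | hx
  · exact ⟨x₀, by simp, (hs x x₀ hx fun p hp h => (hx₀ p hp).not_ge h.2).symm⟩
  · set T := (insert x₀ s).filter (· ≤ x)
    have hT : T.Nonempty := ⟨x₀, by simp [T, hx.le]⟩
    have hpT := Finset.mem_filter.1 (T.max'_mem hT)
    refine ⟨T.max' hT, hpT.1, hs _ x hpT.2 fun p hp h => h.1.not_ge ?_⟩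
    exact T.le_max' p (Finset.mem_filter.2 ⟨Finset.mem_insert_of_mem hp, h.2⟩)

section Network

variable {V E : Type} [Fintype V] [DecidableEq V] [Fintype E] [DecidableEq E]
  {N : Network V E}

theorem Network.le_uMax (N : Network V E) (v : V) (θ : ℝ) : N.u v θ ≤ N.uMax v :=
  le_ciSup (N.u_step v).bddAbove_range θ

theorem Network.uMax_nonneg (N : Network V E) (v : V) : 0 ≤ N.uMax v :=
  (N.u_nonneg v 0).trans (N.le_uMax v 0)

/-- `ν_e L_e` in the notation of the statement, for `v` the tail of `e`. -/
noncomputable def Network.maxNodeInflow (N : Network V E) (v : V) : ℝ :=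
  (∑ e' ∈ N.inEdges v, N.cap e') + N.uMax v

theorem FlowOverTime.intervalIntegrable_fplus (f : FlowOverTime N) (e : E) (a b : ℝ) :
    IntervalIntegrable (f.fplus e) volume a b :=
  (f.fplus_int e a).symm.trans (f.fplus_int e b)

theorem FlowOverTime.intervalIntegrable_fminus (f : FlowOverTime N) (e : E) (a b : ℝ) :
    IntervalIntegrable (f.fminus e) volume a b :=
  (f.fminus_int e a).symm.trans (f.fminus_int e b)

theorem FlowOverTime.intervalIntegrable_fminus_add_time (f : FlowOverTime N) (e : E)
    (a b : ℝ) : IntervalIntegrable (fun ζ => f.fminus e (ζ + N.time e)) volume a b := by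
  simpa using (f.intervalIntegrable_fminus e (a + N.time e) (b + N.time e)).comp_add_right
    (N.time e)

theorem continuous_queueOf (f : FlowOverTime N) (e : E) :
    Continuous (queueOf N f.fplus f.fminus e) :=
  (intervalIntegral.continuous_primitive (f.intervalIntegrable_fplus e) 0).sub
    ((intervalIntegral.continuous_primitive (f.intervalIntegrable_fminus e) 0).comp
      (continuous_add_const _))

theorem queueOf_sub_queueOf (f : FlowOverTime N) (e : E) (a b : ℝ) :
    queueOf N f.fplus f.fminus e b - queueOf N f.fplus f.fminus e a =
      ∫ ζ in a..b, (f.fplus e ζ - f.fminus e (ζ + N.time e)) := by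
  rw [intervalIntegral.integral_sub (f.intervalIntegrable_fplus e a b)
      (f.intervalIntegrable_fminus_add_time e a b),
    intervalIntegral.integral_comp_add_right (f.fminus e), queueOf, queueOf]
  have hplus := intervalIntegral.integral_interval_sub_left (f.intervalIntegrable_fplus e 0 b)
    (f.intervalIntegrable_fplus e 0 a)
  have hminus := intervalIntegral.integral_interval_sub_left
    (f.intervalIntegrable_fminus e 0 (b + N.time e))
    (f.intervalIntegrable_fminus e 0 (a + N.time e))
  linarith

theorem Feasible.fminus_le_cap {f : FlowOverTime N} (hf : Feasible N f) (e : E) {θ : ℝ}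
    (hθ : 0 ≤ θ) : f.fminus e θ ≤ N.cap e := by
  rcases lt_or_ge θ (N.time e) with h | h
  · rw [hf.2.2.1 e θ hθ h]
    exact (N.cap_pos e).le
  · have hout := hf.2.2.2 e (θ - N.time e) (sub_nonneg.2 h)
    rw [sub_add_cancel] at hout
    rw [hout]
    split_ifs
    exacts [le_rfl, min_le_right _ _]

theorem Feasible.fplus_le_maxNodeInflow {f : FlowOverTime N} (hf : Feasible N f) (e : E)
    {θ : ℝ} (hθ : 0 ≤ θ) : f.fplus e θ ≤ N.maxNodeInflow (N.tail e) := by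
  have hsingle : f.fplus e θ ≤ ∑ e' ∈ N.outEdges (N.tail e), f.fplus e' θ :=
    Finset.single_le_sum (fun e' _ => f.fplus_nonneg e' θ) (by simp [Network.outEdges])
  have hin :
      ∑ e' ∈ N.inEdges (N.tail e), f.fminus e' θ ≤ ∑ e' ∈ N.inEdges (N.tail e), N.cap e' :=
    Finset.sum_le_sum fun e' _ => hf.fminus_le_cap e' hθ
  unfold Network.maxNodeInflow
  by_cases hv : N.tail e = N.sink
  · have hsink := hf.2.1 θ hθ
    rw [← hv] at hsink
    linarith [N.uMax_nonneg (N.tail e)]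
  · linarith [hf.1 _ hv θ hθ, N.le_uMax (N.tail e) θ]

theorem abs_queueOf_sub_le {f : FlowOverTime N} (hf : Feasible N f) (e : E) {a b : ℝ}
    (ha : 0 ≤ a) (hb : 0 ≤ b) :
    |queueOf N f.fplus f.fminus e b - queueOf N f.fplus f.fminus e a| ≤
      max (N.maxNodeInflow (N.tail e)) (N.cap e) * |b - a| := by
  rw [queueOf_sub_queueOf, ← Real.norm_eq_abs]
  refine intervalIntegral.norm_integral_le_of_norm_le_const fun ζ hζ => ?_
  have hζ : 0 ≤ ζ := (le_min ha hb).trans hζ.1.le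
  exact abs_sub_le_of_nonneg_of_le (f.fplus_nonneg e ζ)
    ((hf.fplus_le_maxNodeInflow e hζ).trans (le_max_left _ _)) (f.fminus_nonneg e _)
    ((hf.fminus_le_cap e (by linarith [N.time_pos e])).trans (le_max_right _ _))

theorem queueOf_zero {f : FlowOverTime N} (hf : Feasible N f) (e : E) :
    queueOf N f.fplus f.fminus e 0 = 0 := by
  rw [queueOf, zero_add, intervalIntegral.integral_same, zero_sub, neg_eq_zero,
    intervalIntegral.integral_of_le (N.time_pos e).le, integral_Ioc_eq_integral_Ioo]
  exact setIntegral_eq_zero_of_forall_eq_zero fun ζ hζ => hf.2.2.1 e ζ hζ.1.le hζ.2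

/-- While the queue is empty or negative, the outflow `min (f⁺_e, ν_e)` is at most the
inflow `f⁺_e`. -/
theorem queueOf_le_queueOf_of_nonpos {f : FlowOverTime N} (hf : Feasible N f) (e : E)
    {s t : ℝ} (hs : 0 ≤ s) (hst : s < t)
    (hq : ∀ ζ ∈ Ioo s t, queueOf N f.fplus f.fminus e ζ ≤ 0) :
    queueOf N f.fplus f.fminus e s ≤ queueOf N f.fplus f.fminus e t := by
  rw [← sub_nonneg, queueOf_sub_queueOf, intervalIntegral.integral_of_le hst.le,
    integral_Ioc_eq_integral_Ioo]
  refine setIntegral_nonneg measurableSet_Ioo fun ζ hζ => ?_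
  rw [hf.2.2.2 e ζ (hs.trans hζ.1.le), if_neg (hq ζ hζ).not_gt, sub_nonneg]
  exact min_le_left _ _

theorem queueOf_nonneg {f : FlowOverTime N} (hf : Feasible N f) (e : E) {θ : ℝ}
    (hθ : 0 ≤ θ) : 0 ≤ queueOf N f.fplus f.fminus e θ :=
  nonneg_of_le_of_nonpos_on_Ioo hθ (continuous_queueOf f e).continuousOn
    (queueOf_zero hf e).ge fun _ _ hs _ hst hq => queueOf_le_queueOf_of_nonpos hf e hs hst hq

theorem ctimeOf_nonneg {f : FlowOverTime N} (hf : Feasible N f) (e : E) {θ : ℝ}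
    (hθ : 0 ≤ θ) : 0 ≤ ctimeOf N f.fplus f.fminus e θ :=
  add_nonneg (N.time_pos e).le (div_nonneg (queueOf_nonneg hf e hθ) (N.cap_pos e).le)

theorem abs_ctimeOf_sub_le {f : FlowOverTime N} (hf : Feasible N f) (e : E) {θ θ' : ℝ}
    (hθ : 0 ≤ θ) (hθ' : 0 ≤ θ') :
    |ctimeOf N f.fplus f.fminus e θ - ctimeOf N f.fplus f.fminus e θ'| ≤
      max 1 (N.maxNodeInflow (N.tail e) / N.cap e) * |θ - θ'| := by
  have hν := N.cap_pos e
  calc |ctimeOf N f.fplus f.fminus e θ - ctimeOf N f.fplus f.fminus e θ'|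
      = |queueOf N f.fplus f.fminus e θ - queueOf N f.fplus f.fminus e θ'| / N.cap e := by
        rw [ctimeOf, ctimeOf, add_sub_add_left_eq_sub, ← sub_div, abs_div, abs_of_pos hν]
    _ ≤ max (N.maxNodeInflow (N.tail e)) (N.cap e) * |θ - θ'| / N.cap e :=
        div_le_div_of_nonneg_right (abs_queueOf_sub_le hf e hθ' hθ) hν.le
    _ = max 1 (N.maxNodeInflow (N.tail e) / N.cap e) * |θ - θ'| := by
        rw [mul_div_right_comm, ← max_div_div_right hν.le, div_self hν.ne', max_comm]

theorem labelOf_eq_walkDist (f : FlowOverTime N) (v : V) (θ : ℝ) :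
    labelOf N f.fplus f.fminus v θ =
      walkDist N.tail N.head (fun e => ctimeOf N f.fplus f.fminus e θ) v N.sink :=
  rfl

end Network

theorem labels_lipschitz_general
    {V E : Type} [Fintype V] [DecidableEq V] [Fintype E] [DecidableEq E] [Nonempty E]
    (N : Network V E) :
    ∃ L : ℝ, 0 < L ∧
      L = ∑ e : E, max 1
            (((∑ e' ∈ N.inEdges (N.tail e), N.cap e') + N.uMax (N.tail e)) / N.cap e) ∧
      ∀ f : FlowOverTime N, Feasible N f →
        (∀ e : E, ∀ θ θ' : ℝ, 0 ≤ θ → 0 ≤ θ' →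
          |ctimeOf N f.fplus f.fminus e θ - ctimeOf N f.fplus f.fminus e θ'|
            ≤ max 1 (((∑ e' ∈ N.inEdges (N.tail e), N.cap e') + N.uMax (N.tail e)) / N.cap e)
                * |θ - θ'|) ∧
        (∀ v : V, ∀ θ θ' : ℝ, 0 ≤ θ → 0 ≤ θ' →
          |labelOf N f.fplus f.fminus v θ - labelOf N f.fplus f.fminus v θ'| ≤ L * |θ - θ'|) := by
  refine ⟨_, Finset.sum_pos (fun e _ => one_pos.trans_le (le_max_left _ _)) Finset.univ_nonempty,
    rfl, fun f hf => ⟨fun e θ θ' hθ hθ' => abs_ctimeOf_sub_le hf e hθ hθ', ?_⟩⟩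
  intro v θ θ' hθ hθ'
  rw [labelOf_eq_walkDist, labelOf_eq_walkDist, Finset.sum_mul]
  exact abs_walkDist_sub_walkDist_le (N.reach v) (fun e => ctimeOf_nonneg hf e hθ)
    (fun e => ctimeOf_nonneg hf e hθ') fun e => abs_ctimeOf_sub_le hf e hθ hθ'

/-- For every single-sink network there is a constant `L > 0`, namely
`L = Σ_{e∈E} max{1, L_e}` with `L_e = (Σ_{e'∈δ⁻(tail e)} ν_{e'} + max_ζ u_{tail e}(ζ))/ν_e`,
such that for every feasible flow over time each instantaneous travel time `c_e` is
Lipschitz on `ℝ≥0` with constant `max{1, L_e}` and each node label `ℓ_v` is Lipschitz on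
`ℝ≥0` with constant `L`. -/
theorem labels_lipschitz
    {V E : Type} [Fintype V] [DecidableEq V] [Fintype E] [DecidableEq E] [Nonempty E]
    (N : Network V E) (hbdd : N.BddInflow) :
    ∃ L : ℝ, 0 < L ∧
      L = ∑ e : E, max 1
            (((∑ e' ∈ N.inEdges (N.tail e), N.cap e') + N.uMax (N.tail e)) / N.cap e) ∧
      ∀ f : FlowOverTime N, Feasible N f →
        (∀ e : E, ∀ θ θ' : ℝ, 0 ≤ θ → 0 ≤ θ' →
          |ctimeOf N f.fplus f.fminus e θ - ctimeOf N f.fplus f.fminus e θ'|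
            ≤ max 1 (((∑ e' ∈ N.inEdges (N.tail e), N.cap e') + N.uMax (N.tail e)) / N.cap e)
                * |θ - θ'|) ∧
        (∀ v : V, ∀ θ θ' : ℝ, 0 ≤ θ → 0 ≤ θ' →
          |labelOf N f.fplus f.fminus v θ - labelOf N f.fplus f.fminus v θ'| ≤ L * |θ - θ'|) :=
  labels_lipschitz_general N
end

section
/- Let f be a feasible flow over time in a single-sink network N, let e be an edge, and let (a,b) ⊆ ℝ≥0 be an interval such that f⁺_e(ζ) = 0 for almost every ζ ∈ (a,b). Then q_e(θ) = max{q_e(a) − ν_e·(θ − a), 0} for all θ ∈ [a,b]. In particular, the queue length q_e and the instantaneous travel time c_e(θ) = τ_e + q_e(θ)/ν_e are convex functions on [a,b], and so is θ ↦ c_e(θ) + ℓ(θ) for any affine function ℓ. -/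
open MeasureTheory Set

variable {V E : Type} [Fintype V] [DecidableEq V] [Fintype E] [DecidableEq E]

/-!
While no flow enters `e`, the queue changes only through its outflow, which is at most `ν_e`
and equals `ν_e` while the queue is positive. Hence the queue drains linearly at rate `ν_e`
until it is empty, and it can never become negative (a negative queue has outflow bounded by
the inflow, so the queue cannot decrease). Both facts are obtained by looking at the last time
before `θ` at which the claimed bound holds. The convexity statements follow since
`θ ↦ max (q_e(a) - ν_e (θ - a)) 0` is a maximum of affine functions.
-/

open intervalIntegral

theorem ContinuousOn.exists_last_nonpos {g : ℝ → ℝ} {a b : ℝ}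
    (hg : ContinuousOn g (Icc a b)) (hab : a ≤ b) (ha : g a ≤ 0) :
    ∃ s ∈ Icc a b, g s ≤ 0 ∧ ∀ ζ ∈ Ioo s b, 0 < g ζ := by
  set S := Icc a b ∩ g ⁻¹' Iic 0
  have hS : IsCompact S := isCompact_Icc.of_isClosed_subset
    (hg.preimage_isClosed_of_isClosed isClosed_Icc isClosed_Iic) inter_subset_left
  obtain ⟨hs, hgs⟩ : sSup S ∈ S := hS.sSup_mem ⟨a, ⟨le_rfl, hab⟩, ha⟩
  refine ⟨sSup S, hs, hgs, fun ζ hζ => not_le.mp fun hgζ => hζ.1.not_ge ?_⟩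
  exact le_csSup hS.bddAbove ⟨⟨hs.1.trans hζ.1.le, hζ.2.le⟩, hgζ⟩

theorem convexOn_mul_add {s : Set ℝ} (hs : Convex ℝ s) (m c : ℝ) :
    ConvexOn ℝ s fun x => m * x + c :=
  ((LinearMap.mul ℝ ℝ m).convexOn hs).add_const c

namespace FlowOverTime

variable {N : Network V E} (f : FlowOverTime N) (e : E)

theorem intervalIntegrable_fplus_s10 (s θ : ℝ) : IntervalIntegrable (f.fplus e) volume s θ :=
  (f.fplus_int e s).symm.trans (f.fplus_int e θ)

theorem intervalIntegrable_fminus_s10 (s θ : ℝ) : IntervalIntegrable (f.fminus e) volume s θ :=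
  (f.fminus_int e s).symm.trans (f.fminus_int e θ)

theorem intervalIntegrable_fminus_add_time_s10 (s θ : ℝ) :
    IntervalIntegrable (fun ζ => f.fminus e (ζ + N.time e)) volume s θ := by
  simpa using (f.intervalIntegrable_fminus_s10 e (s + N.time e) (θ + N.time e)).comp_add_right
    (N.time e)

theorem continuous_queueOf : Continuous (queueOf N f.fplus f.fminus e) :=
  (continuous_primitive (f.intervalIntegrable_fplus_s10 e) 0).sub <|
    (continuous_primitive (f.intervalIntegrable_fminus_s10 e) 0).comp (continuous_add_const _)

theorem queueOf_eq_add_sub (s θ : ℝ) :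
    queueOf N f.fplus f.fminus e θ = queueOf N f.fplus f.fminus e s
      + (∫ ζ in s..θ, f.fplus e ζ) - ∫ ζ in s..θ, f.fminus e (ζ + N.time e) := by
  rw [integral_comp_add_right (f.fminus e), queueOf, queueOf,
    ← integral_add_adjacent_intervals (f.fplus_int e s) (f.intervalIntegrable_fplus_s10 e s θ),
    ← integral_add_adjacent_intervals (f.fminus_int e (s + N.time e))
      (f.intervalIntegrable_fminus_s10 e (s + N.time e) (θ + N.time e))]
  ring

end FlowOverTime

namespace Feasible

variable {N : Network V E} {f : FlowOverTime N} (hf : Feasible N f) (e : E)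
include hf

theorem queueOf_zero : queueOf N f.fplus f.fminus e 0 = 0 := by
  rw [queueOf, integral_same, zero_add, zero_sub, neg_eq_zero]
  calc ∫ ζ in 0..N.time e, f.fminus e ζ = ∫ _ in 0..N.time e, (0 : ℝ) :=
        integral_congr_Ioo_of_le (N.time_pos e).le fun ζ hζ => hf.2.2.1 e ζ hζ.1.le hζ.2
    _ = 0 := integral_zero

theorem fminus_add_time_le_cap {ζ : ℝ} (hζ : 0 ≤ ζ) :
    f.fminus e (ζ + N.time e) ≤ N.cap e := by
  rw [hf.2.2.2 e ζ hζ]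
  split_ifs
  exacts [le_rfl, min_le_right _ _]

theorem fminus_add_time_le_fplus {ζ : ℝ} (hζ : 0 ≤ ζ)
    (hq : queueOf N f.fplus f.fminus e ζ ≤ 0) :
    f.fminus e (ζ + N.time e) ≤ f.fplus e ζ := by
  rw [hf.2.2.2 e ζ hζ, if_neg hq.not_gt]
  exact min_le_left _ _

theorem fminus_add_time_eq_cap {ζ : ℝ} (hζ : 0 ≤ ζ)
    (hq : 0 < queueOf N f.fplus f.fminus e ζ) :
    f.fminus e (ζ + N.time e) = N.cap e := by
  rw [hf.2.2.2 e ζ hζ, if_pos hq]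

theorem queueOf_nonneg {θ : ℝ} (hθ : 0 ≤ θ) : 0 ≤ queueOf N f.fplus f.fminus e θ := by
  by_contra! hθneg
  obtain ⟨s, ⟨hs0, hsθ⟩, hqs, hneg⟩ :=
    (f.continuous_queueOf e).neg.continuousOn.exists_last_nonpos hθ (by simp [hf.queueOf_zero e])
  have hout : ∫ ζ in s..θ, f.fminus e (ζ + N.time e) ≤ ∫ ζ in s..θ, f.fplus e ζ :=
    integral_mono_on_of_le_Ioo hsθ (f.intervalIntegrable_fminus_add_time_s10 e s θ)
      (f.intervalIntegrable_fplus_s10 e s θ) fun ζ hζ =>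
        hf.fminus_add_time_le_fplus e (hs0.trans hζ.1.le) (neg_pos.mp (hneg ζ hζ)).le
  have := f.queueOf_eq_add_sub e s θ
  simp only [Pi.neg_apply, neg_nonpos] at hqs
  linarith

theorem sub_cap_mul_le_queueOf {s θ : ℝ} (hs : 0 ≤ s) (hsθ : s ≤ θ) :
    queueOf N f.fplus f.fminus e s - N.cap e * (θ - s) ≤ queueOf N f.fplus f.fminus e θ := by
  have hin : 0 ≤ ∫ ζ in s..θ, f.fplus e ζ :=
    integral_nonneg hsθ fun ζ _ => f.fplus_nonneg e ζ
  have hout : ∫ ζ in s..θ, f.fminus e (ζ + N.time e) ≤ ∫ _ in s..θ, N.cap e :=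
    integral_mono_on hsθ (f.intervalIntegrable_fminus_add_time_s10 e s θ) intervalIntegrable_const
      fun ζ hζ => hf.fminus_add_time_le_cap e (hs.trans hζ.1)
  rw [intervalIntegral.integral_const, smul_eq_mul] at hout
  linarith [f.queueOf_eq_add_sub e s θ]

theorem queueOf_eq_sub_cap_mul {s θ : ℝ} (hs : 0 ≤ s) (hsθ : s ≤ θ)
    (hin : ∀ᵐ ζ : ℝ ∂volume, ζ ∈ Ioo s θ → f.fplus e ζ = 0)
    (hq : ∀ ζ ∈ Ioo s θ, 0 < queueOf N f.fplus f.fminus e ζ) :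
    queueOf N f.fplus f.fminus e θ = queueOf N f.fplus f.fminus e s - N.cap e * (θ - s) := by
  have hin' : ∫ ζ in s..θ, f.fplus e ζ = 0 := by
    rw [integral_of_le hsθ, integral_Ioc_eq_integral_Ioo]
    exact setIntegral_eq_zero_of_ae_eq_zero hin
  have hout : ∫ ζ in s..θ, f.fminus e (ζ + N.time e) = ∫ _ in s..θ, N.cap e :=
    integral_congr_Ioo_of_le hsθ fun ζ hζ =>
      hf.fminus_add_time_eq_cap e (hs.trans hζ.1.le) (hq ζ hζ)
  rw [f.queueOf_eq_add_sub e s θ, hin', hout, intervalIntegral.integral_const, smul_eq_mul]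
  ring

theorem queueOf_eq_max_of_ae_fplus_eq_zero {a b θ : ℝ} (ha : 0 ≤ a)
    (hin : ∀ᵐ ζ : ℝ ∂volume, ζ ∈ Ioo a b → f.fplus e ζ = 0) (hθ : θ ∈ Icc a b) :
    queueOf N f.fplus f.fminus e θ
      = max (queueOf N f.fplus f.fminus e a - N.cap e * (θ - a)) 0 := by
  set q := queueOf N f.fplus f.fminus e
  set h := fun θ => max (q a - N.cap e * (θ - a)) 0
  refine le_antisymm ?_ <|
    max_le (hf.sub_cap_mul_le_queueOf e ha hθ.1) (hf.queueOf_nonneg e (ha.trans hθ.1))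
  -- At the last time `s ≤ θ` with `q s ≤ h s` the queue is positive on `(s, θ)`, so it drains
  -- at full capacity there, while `h` decreases at most that fast.
  by_contra! hlt
  obtain ⟨s, ⟨has, hsθ⟩, hs, hgt⟩ :=
    ((f.continuous_queueOf e).sub (by fun_prop : Continuous h)).continuousOn.exists_last_nonpos
      hθ.1 (by simp [h, q])
  have hdrain : q θ = q s - N.cap e * (θ - s) :=
    hf.queueOf_eq_sub_cap_mul e (ha.trans has) hsθ
      (hin.mono fun ζ hζ hmem => hζ ⟨has.trans_lt hmem.1, hmem.2.trans_le hθ.2⟩)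
      fun ζ hζ => (le_max_right _ _).trans_lt (sub_pos.mp (hgt ζ hζ))
  have hh : h s - N.cap e * (θ - s) ≤ h θ := by
    have hcap : 0 ≤ N.cap e * (θ - s) := mul_nonneg (N.cap_pos e).le (sub_nonneg.mpr hsθ)
    refine sub_le_iff_le_add.mpr (max_le ?_ ?_)
    · linarith [le_max_left (q a - N.cap e * (θ - a)) 0]
    · linarith [le_max_right (q a - N.cap e * (θ - a)) 0]
  simp only [Pi.sub_apply, sub_nonpos] at hs
  linarith

end Feasible

theorem queue_on_inactive_interval_general
    {V E : Type} [Fintype V] [DecidableEq V] [Fintype E] [DecidableEq E]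
    (N : Network V E)
    (f : FlowOverTime N) (hf : Feasible N f)
    (e : E) (a b : ℝ) (ha : 0 ≤ a)
    (hzero : ∀ᵐ ζ : ℝ ∂volume, ζ ∈ Set.Ioo a b → f.fplus e ζ = 0) :
    (∀ θ ∈ Set.Icc a b,
      queueOf N f.fplus f.fminus e θ
        = max (queueOf N f.fplus f.fminus e a - N.cap e * (θ - a)) 0) ∧
    ConvexOn ℝ (Set.Icc a b) (queueOf N f.fplus f.fminus e) ∧
    ConvexOn ℝ (Set.Icc a b) (ctimeOf N f.fplus f.fminus e) ∧
    ∀ m c : ℝ, ConvexOn ℝ (Set.Icc a b)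
      (fun θ => ctimeOf N f.fplus f.fminus e θ + (m * θ + c)) := by
  set q := queueOf N f.fplus f.fminus e
  have hq (θ) (hθ : θ ∈ Icc a b) : q θ = max (q a - N.cap e * (θ - a)) 0 :=
    hf.queueOf_eq_max_of_ae_fplus_eq_zero e ha hzero hθ
  have hqconv : ConvexOn ℝ (Icc a b) q :=
    ((convexOn_mul_add (convex_Icc a b) (-N.cap e) (q a + N.cap e * a)).sup
      (convexOn_const 0 (convex_Icc a b))).congr fun θ hθ => by
        rw [hq θ hθ, Pi.sup_apply]; ring_nf
  have hcconv : ConvexOn ℝ (Icc a b) (ctimeOf N f.fplus f.fminus e) :=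
    ((hqconv.smul (inv_nonneg.mpr (N.cap_pos e).le)).add_const (N.time e)).congr fun θ _ => by
      simp only [ctimeOf, Pi.add_apply, smul_eq_mul, q]; ring
  exact ⟨hq, hqconv, hcconv, fun m c => hcconv.add (convexOn_mul_add (convex_Icc a b) m c)⟩

/-- If `f⁺_e` vanishes almost everywhere on an interval `(a,b) ⊆ ℝ≥0`,
then `q_e(θ) = max{q_e(a) − ν_e(θ−a), 0}` on `[a,b]`; in particular `q_e`, the
instantaneous travel time `c_e`, and `c_e + ℓ` for any affine `ℓ` are convex on `[a,b]`. -/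
theorem queue_on_inactive_interval
    {V E : Type} [Fintype V] [DecidableEq V] [Fintype E] [DecidableEq E]
    (N : Network V E) (hbdd : N.BddInflow)
    (f : FlowOverTime N) (hf : Feasible N f)
    (e : E) (a b : ℝ) (ha : 0 ≤ a)
    (hzero : ∀ᵐ ζ : ℝ ∂volume, ζ ∈ Set.Ioo a b → f.fplus e ζ = 0) :
    (∀ θ ∈ Set.Icc a b,
      queueOf N f.fplus f.fminus e θ
        = max (queueOf N f.fplus f.fminus e a - N.cap e * (θ - a)) 0) ∧
    ConvexOn ℝ (Set.Icc a b) (queueOf N f.fplus f.fminus e) ∧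
    ConvexOn ℝ (Set.Icc a b) (ctimeOf N f.fplus f.fminus e) ∧
    ∀ m c : ℝ, ConvexOn ℝ (Set.Icc a b)
      (fun θ => ctimeOf N f.fplus f.fminus e θ + (m * θ + c)) :=
  queue_on_inactive_interval_general N f hf e a b ha hzero
end
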